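/- For every p ∈ (0,1), the plug-in estimator q̃Dₙ(p) = qD(p; Q̃ₙ) converges almost surely to qD(p; Q) as n → ∞. -/

import Mathlib

open MeasureTheory Filter Set

/-- The (generalized inverse) quantile function of `F`: `Q(p) = inf {t : F t ≥ p}`. -/
noncomputable def quantile (F : ℝ → ℝ) (p : ℝ) : ℝ := sInf {t : ℝ | p ≤ F t}

/-- The quantile D curve `qD(p; Q) = 1 - Q(p/2)/Q(1 - p/2)`. -/
noncomputable def qDcurve (Q : ℝ → ℝ) (p : ℝ) : ℝ := 1 - Q (p / 2) / Q (1 - p / 2)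

/-- The empirical distribution function of the sample `X 0, …, X (n-1)`. -/
noncomputable def empCDF {Ω : Type*} (X : ℕ → Ω → ℝ) (n : ℕ) (ω : Ω) (t : ℝ) : ℝ :=
  (n : ℝ)⁻¹ * ∑ i ∈ Finset.range n, (if X i ω ≤ t then (1 : ℝ) else 0)

lemma empCDF_mono {Ω : Type*} (X : ℕ → Ω → ℝ) (n : ℕ) (ω : Ω) :
    Monotone (empCDF X n ω) := by
  intro s u hsu
  unfold empCDF
  apply mul_le_mul_of_nonneg_left _ (by positivity)
  apply Finset.sum_le_sum
  intro i _
  split_ifs with h1 h2 <;> try norm_num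
  exact h2 (h1.trans hsu)

lemma quantile_eq_of_crossing {F : ℝ → ℝ} {p x : ℝ} (hx : 0 < x) (hFx : F x = p)
    (hp : 0 < p) (hF0 : ∀ t ≤ 0, F t = 0) (hFstrict : StrictMonoOn F (Set.Ioi (0:ℝ))) :
    quantile F p = x := by
  have lb : ∀ t ∈ {t : ℝ | p ≤ F t}, x ≤ t := by
    intro t ht
    by_contra hlt
    push_neg at hlt
    rcases le_or_gt t 0 with h0 | h0
    · have h := hF0 t h0
      have : p ≤ 0 := by simpa [h] using ht
      linarith
    · have h := hFstrict h0 hx hlt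
      rw [hFx] at h
      have : p ≤ F t := ht
      linarith
  have hxm : x ∈ {t : ℝ | p ≤ F t} := by simp [hFx]
  exact le_antisymm (csInf_le ⟨x, lb⟩ hxm) (le_csInf ⟨x, hxm⟩ lb)

lemma quantile_tendsto {F : ℝ → ℝ} {G : ℕ → ℝ → ℝ} {p x : ℝ}
    (hx : 0 < x) (hFx : F x = p) (hp : 0 < p)
    (hF0 : ∀ t ≤ 0, F t = 0) (hFstrict : StrictMonoOn F (Set.Ioi (0:ℝ)))
    (hconv : ∀ q : ℚ, Tendsto (fun n => G n q) atTop (nhds (F q)))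
    (hGmono : ∀ n : ℕ, 1 ≤ n → ∀ s t : ℝ, s ≤ t → G n s ≤ G n t + 2 / n) :
    Tendsto (fun n => quantile (G n) p) atTop (nhds x) := by
  rw [Metric.tendsto_nhds]
  intro ε hε
  obtain ⟨q2, hq2a, hq2b⟩ := exists_rat_btwn (show x < x + ε by linarith)
  obtain ⟨q1, hq1a, hq1b⟩ := exists_rat_btwn (show x - ε < x by linarith)
  have hFq2 : p < F q2 := by
    rw [← hFx]
    exact hFstrict hx (hx.trans hq2a) hq2a
  have hFq1 : F q1 < p := by
    rcases le_or_gt (q1:ℝ) 0 with h0 | h0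
    · rw [hF0 _ h0]; exact hp
    · rw [← hFx]; exact hFstrict h0 hx hq1b
  have E1 : ∀ᶠ n in atTop, p < G n q2 :=
    (hconv q2).eventually (eventually_gt_nhds hFq2)
  have E2 : Tendsto (fun n : ℕ => G n q1 + 2 / n) atTop (nhds (F q1 + 0)) :=
    (hconv q1).add (tendsto_const_div_atTop_nhds_zero_nat 2)
  have E2' : ∀ᶠ n in atTop, G n q1 + 2 / n < p :=
    E2.eventually (eventually_lt_nhds (by simpa using hFq1))
  filter_upwards [E1, E2', eventually_ge_atTop 1] with n h1 h2 hn1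
  have hq2S : (q2:ℝ) ∈ {t : ℝ | p ≤ G n t} := le_of_lt h1
  have lb : ∀ t ∈ {t : ℝ | p ≤ G n t}, (q1:ℝ) ≤ t := by
    intro t ht
    by_contra hlt
    push_neg at hlt
    have h3 := hGmono n hn1 t q1 hlt.le
    have h4 : G n t < p := lt_of_le_of_lt h3 h2
    have : p ≤ G n t := ht
    linarith
  have h_le : quantile (G n) p ≤ q2 := csInf_le ⟨q1, lb⟩ hq2S
  have h_ge : (q1:ℝ) ≤ quantile (G n) p := le_csInf ⟨_, hq2S⟩ lb
  rw [Real.dist_eq, abs_sub_lt_iff]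
  constructor <;> linarith

lemma empCDF_tendsto_ae {Ω : Type*} [MeasurableSpace Ω] (μ : Measure Ω)
    [IsProbabilityMeasure μ]
    (X : ℕ → Ω → ℝ) (hXmeas : ∀ i, Measurable (X i))
    (hindep : ProbabilityTheory.iIndepFun X μ)
    (F : ℝ → ℝ) (hdist : ∀ i t, (μ {ω | X i ω ≤ t}).toReal = F t) (t : ℝ) :
    ∀ᵐ ω ∂μ, Tendsto (fun n => empCDF X n ω t) atTop (nhds (F t)) := by
  haveI : ∀ i, IsProbabilityMeasure (Measure.map (X i) μ) :=
    fun i => Measure.isProbabilityMeasure_map (hXmeas i).aemeasurable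
  have hmap : ∀ i, Measure.map (X i) μ = Measure.map (X 0) μ := by
    intro i
    refine MeasureTheory.Measure.ext_of_Iic _ _ (fun a => ?_)
    rw [Measure.map_apply (hXmeas i) measurableSet_Iic,
        Measure.map_apply (hXmeas 0) measurableSet_Iic]
    have hset : ∀ j, X j ⁻¹' Iic a = {ω | X j ω ≤ a} := fun j => rfl
    rw [hset i, hset 0]
    refine (ENNReal.toReal_eq_toReal_iff' (measure_ne_top μ _) (measure_ne_top μ _)).1 ?_
    rw [hdist i a, hdist 0 a]
  have hident : ∀ i, ProbabilityTheory.IdentDistrib (X i) (X 0) μ μ :=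
    fun i => ⟨(hXmeas i).aemeasurable, (hXmeas 0).aemeasurable, hmap i⟩
  set g : ℝ → ℝ := (Iic t).indicator (fun _ => 1) with hg_def
  have hg : Measurable g := measurable_const.indicator measurableSet_Iic
  set Y : ℕ → Ω → ℝ := fun i => g ∘ X i with hY_def
  have hYindep : Pairwise (Function.onFun (ProbabilityTheory.IndepFun · · μ) Y) := by
    intro i j hij
    exact (hindep.comp (fun _ => g) (fun _ => hg)).indepFun hij
  have hYident : ∀ i, ProbabilityTheory.IdentDistrib (Y i) (Y 0) μ μ :=
    fun i => (hident i).comp hg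
  have hY0 : Y 0 = (X 0 ⁻¹' Iic t).indicator (fun _ => (1:ℝ)) := by
    funext ω
    classical
    simp only [hY_def, hg_def, Function.comp_apply]
    rw [Set.indicator_apply, Set.indicator_apply]
    simp [Set.mem_preimage]
  have hmeasset : MeasurableSet (X 0 ⁻¹' Iic t) := (hXmeas 0) measurableSet_Iic
  have hint : Integrable (Y 0) μ := by
    rw [hY0]
    exact (integrable_const 1).indicator hmeasset
  have hexp : (∫ a, Y 0 a ∂μ) = F t := by
    rw [hY0, integral_indicator_const _ hmeasset, smul_eq_mul, mul_one]
    exact hdist 0 t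
  have h := ProbabilityTheory.strong_law_ae Y hint hYindep hYident
  rw [hexp] at h
  filter_upwards [h] with ω hω
  have heq : (fun n => empCDF X n ω t)
      = fun n : ℕ => (n:ℝ)⁻¹ • ∑ i ∈ Finset.range n, Y i ω := by
    funext n
    simp [empCDF, hY_def, hg_def, Set.indicator_apply, smul_eq_mul]
  rw [heq]
  exact hω

/-- For every `p ∈ (0,1)`, the plug-in estimator `q̃Dₙ(p) = qD(p; Q̃ₙ)` converges almost
surely to `qD(p; Q)` as `n → ∞`. -/
theorem qD_plugin_pointwise_as_convergence
{Ω : Type*} [MeasurableSpace Ω] (μ : Measure Ω) [IsProbabilityMeasure μ]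
    (X : ℕ → Ω → ℝ) (hXmeas : ∀ i, Measurable (X i))
    (hindep : ProbabilityTheory.iIndepFun X μ)
    (F : ℝ → ℝ)
    (hdist : ∀ i t, (μ {ω | X i ω ≤ t}).toReal = F t)
    (hFcont : Continuous F)
    (hF0 : ∀ t ≤ 0, F t = 0)
    (hF01 : ∀ t > 0, 0 < F t ∧ F t < 1)
    (hFstrict : StrictMonoOn F (Set.Ioi (0 : ℝ)))
(Ftilde : ℕ → Ω → ℝ → ℝ)
    (hFtmeas : ∀ n t, Measurable (fun ω => Ftilde n ω t))
    (hFtclose : ∀ n, 1 ≤ n → ∀ᵐ ω ∂μ, ∀ t, |Ftilde n ω t - empCDF X n ω t| ≤ 1 / n)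
    (p : ℝ) (hp : p ∈ Set.Ioo (0 : ℝ) 1) :
    ∀ᵐ ω ∂μ,
      Tendsto (fun n => qDcurve (quantile (Ftilde n ω)) p) atTop
        (nhds (qDcurve (quantile F) p)) := by
  -- existence of crossing points
  have hcross : ∀ p' ∈ Set.Ioo (0:ℝ) 1, ∃ x > 0, F x = p' := by
    intro p' hp'
    have hmonoSets : Monotone (fun n : ℕ => {ω | X 0 ω ≤ (n:ℝ)}) := by
      intro m n hmn ω hω
      simp only [mem_setOf_eq] at hω ⊢
      exact le_trans hω (by exact_mod_cast hmn)
    have hU : (⋃ n : ℕ, {ω | X 0 ω ≤ (n:ℝ)}) = Set.univ := by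
      ext ω
      simp only [mem_iUnion, mem_setOf_eq, mem_univ, iff_true]
      exact exists_nat_ge (X 0 ω)
    have htend := tendsto_measure_iUnion_atTop (μ := μ) hmonoSets
    rw [hU, measure_univ] at htend
    have htoReal : Tendsto (fun n : ℕ => F (n:ℝ)) atTop (nhds 1) := by
      have h2 := (ENNReal.tendsto_toReal ENNReal.one_ne_top).comp htend
      have h3 : (fun n : ℕ => F (n:ℝ)) = ENNReal.toReal ∘ ⇑μ ∘ fun n : ℕ => {ω | X 0 ω ≤ (n:ℝ)} := by
        funext n
        exact (hdist 0 n).symm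
      rw [h3]
      simpa using h2
    have hev : ∀ᶠ n : ℕ in atTop, p' < F (n:ℝ) :=
      htoReal.eventually (eventually_gt_nhds hp'.2)
    obtain ⟨N, hN⟩ := hev.exists
    have h0N : (0:ℝ) ≤ (N:ℝ) := Nat.cast_nonneg N
    have hmem : p' ∈ Icc (F 0) (F (N:ℝ)) := by
      constructor
      · rw [hF0 0 le_rfl]; exact hp'.1.le
      · exact hN.le
    obtain ⟨x, hxmem, hFx⟩ := intermediate_value_Icc h0N hFcont.continuousOn hmem
    refine ⟨x, ?_, hFx⟩
    rcases lt_or_eq_of_le hxmem.1 with h | h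
    · exact h
    · exfalso
      rw [← h, hF0 0 le_rfl] at hFx
      linarith [hp'.1]
  have hp2 : p / 2 ∈ Set.Ioo (0:ℝ) 1 := ⟨by linarith [hp.1], by linarith [hp.2, hp.1]⟩
  have hp2' : 1 - p / 2 ∈ Set.Ioo (0:ℝ) 1 := ⟨by linarith [hp.2], by linarith [hp.1]⟩
  obtain ⟨x1, hx1pos, hFx1⟩ := hcross (p/2) hp2
  obtain ⟨x2, hx2pos, hFx2⟩ := hcross (1 - p/2) hp2'
  -- a.s. events
  have hclose : ∀ᵐ ω ∂μ, ∀ n : ℕ, 1 ≤ n → ∀ t, |Ftilde n ω t - empCDF X n ω t| ≤ 1 / n := by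
    rw [ae_all_iff]
    intro n
    rcases le_or_gt 1 n with h | h
    · filter_upwards [hFtclose n h] with ω hω _
      exact hω
    · exact Filter.Eventually.of_forall (fun ω hn => absurd hn (by omega))
  have hemp : ∀ᵐ ω ∂μ, ∀ q : ℚ, Tendsto (fun n => empCDF X n ω q) atTop (nhds (F q)) := by
    rw [ae_all_iff]
    intro q
    exact empCDF_tendsto_ae μ X hXmeas hindep F hdist q
  filter_upwards [hclose, hemp] with ω hcl hem
  set G : ℕ → ℝ → ℝ := fun n => Ftilde n ω with hG_def
  have hGq : ∀ q : ℚ, Tendsto (fun n => G n q) atTop (nhds (F q)) := by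
    intro q
    have h0 : Tendsto (fun n : ℕ => (1:ℝ)/n) atTop (nhds 0) :=
      tendsto_const_div_atTop_nhds_zero_nat 1
    have hdiff : Tendsto (fun n => G n q - empCDF X n ω q) atTop (nhds 0) := by
      apply squeeze_zero_norm' ?_ h0
      filter_upwards [eventually_ge_atTop 1] with n hn
      simpa [Real.norm_eq_abs] using hcl n hn q
    have := (hem q).add hdiff
    simpa using this
  have hGmono : ∀ n : ℕ, 1 ≤ n → ∀ s t : ℝ, s ≤ t → G n s ≤ G n t + 2 / n := by
    intro n hn s t hst
    have h1 := abs_le.1 (hcl n hn s)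
    have h2 := abs_le.1 (hcl n hn t)
    have h3 := empCDF_mono X n ω hst
    have h4 : (2:ℝ) / n = 1/n + 1/n := by ring
    rw [h4]
    linarith [h1.1, h1.2, h2.1, h2.2]
  have hT1 := quantile_tendsto hx1pos hFx1 hp2.1 hF0 hFstrict hGq hGmono
  have hT2 := quantile_tendsto hx2pos hFx2 hp2'.1 hF0 hFstrict hGq hGmono
  have hQ1 : quantile F (p/2) = x1 := quantile_eq_of_crossing hx1pos hFx1 hp2.1 hF0 hFstrict
  have hQ2 : quantile F (1 - p/2) = x2 := quantile_eq_of_crossing hx2pos hFx2 hp2'.1 hF0 hFstrict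
  have hmain : Tendsto (fun n => 1 - quantile (G n) (p/2) / quantile (G n) (1 - p/2)) atTop
      (nhds (1 - x1 / x2)) :=
    tendsto_const_nhds.sub (hT1.div hT2 (ne_of_gt hx2pos))
  simpa [qDcurve, hQ1, hQ2] using hmain
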